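/- arXiv:2101.09398 — 5 statements merged into one kernel-verified Lean document; each statement's English description precedes it below -/
import Mathlib

section
/- Fix a treated period t and suppose the treated unit is drawn uniformly at random from {1,...,N}. Let M be a GSC weight tensor with M_{iit} = 1 for every i, with column sums of the slope weights vanishing (sum_{i=1}^N M_{ijt} = 0 for every j in {1,...,N}), and with intercepts given by the least-squares minimizer over the non-treated periods, namely M_{i0t} = -(1/(T-1)) * sum_{s != t} sum_{j=1}^N M_{ijt} Y_{js}(0) for each i. Then the conditional bias vanishes: (1/N) * sum_{i=1}^N ( M_{i0t} + sum_{j=1}^N M_{ijt} Y_{jt}(0) ) = 0. -/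
open Finset

/-- Unit randomization with least-squares intercepts over the non-treated periods:
the conditional bias of the GSC estimator vanishes when the slope-weight column sums vanish. -/
theorem stmt1 (N T : ℕ) (hN : 0 < N) (hT : 2 ≤ T) (t : Fin T)
    (Y0 : Fin N → Fin T → ℝ)
    (M0 : Fin N → Fin T → ℝ) (M : Fin N → Fin N → Fin T → ℝ)
    (hdiag : ∀ i, M i i t = 1)
    (hcol : ∀ j, ∑ i, M i j t = 0)
    (hint : ∀ i, M0 i t
      = -(1 / ((T : ℝ) - 1)) * ∑ s ∈ univ.erase t, ∑ j, M i j t * Y0 j s) :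
    (N : ℝ)⁻¹ * ∑ i, (M0 i t + ∑ j, M i j t * Y0 j t) = 0 := by
  have h1 : ∑ i, M0 i t = 0 := by
    simp only [hint, ← Finset.mul_sum]
    rw [Finset.sum_comm]
    have : ∀ s ∈ univ.erase t, ∑ i : Fin N, ∑ j, M i j t * Y0 j s = 0 := by
      intro s _
      rw [Finset.sum_comm]
      simp [← Finset.sum_mul, hcol]
    rw [Finset.sum_congr rfl this]
    simp
  have h2 : ∑ i : Fin N, ∑ j, M i j t * Y0 j t = 0 := by
    rw [Finset.sum_comm]
    simp [← Finset.sum_mul, hcol]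
  rw [Finset.sum_add_distrib, h1, h2]
  simp
end

section
/- Let N and N_T be positive integers with N >= 2*N_T + 2, write [N] = {1,...,N}, and let a be a real-valued function a(i,j,j') where i ranges over size-N_T subsets of [N] and j, j' range over [N] union {0}. Assume a(i,j,j') = 0 whenever j is an element of i or j' is an element of i. Then sum over size-N_T subsets k of [N], sum over size-N_T subsets i of [N] \ k, sum over j, j' in ([N] \ k) union {0} of a(i,j,j') / binom(|[N] \ (k union ({j,j'} intersect [N]))|, N_T) equals sum over size-N_T subsets k of [N], sum over j, j' in [N] union {0} of a(k,j,j'). -/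
open Finset

/-- Subset counting identity for the multiple-treated-units variance estimator.
Units are elements of `Fin N`; the auxiliary intercept index 0 is modeled by `none`
in `Option (Fin N)`, and a unit j by `some j`. -/
theorem stmt6 (N NT : ℕ) (hNT : 0 < NT) (hN : 2 * NT + 2 ≤ N)
    (a : Finset (Fin N) → Option (Fin N) → Option (Fin N) → ℝ)
    (ha : ∀ i ∈ powersetCard NT (univ : Finset (Fin N)), ∀ j j' : Option (Fin N),
      ((∃ x ∈ i, j = some x) ∨ (∃ x ∈ i, j' = some x)) → a i j j' = 0) :
    ∑ k ∈ powersetCard NT (univ : Finset (Fin N)),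
      ∑ i ∈ powersetCard NT kᶜ,
        ∑ j ∈ insert none (kᶜ.image some),
          ∑ j' ∈ insert none (kᶜ.image some),
            a i j j' / ((((kᶜ \ (j.toFinset ∪ j'.toFinset)).card).choose NT : ℝ))
    = ∑ k ∈ powersetCard NT (univ : Finset (Fin N)),
        ∑ j : Option (Fin N), ∑ j' : Option (Fin N), a k j j' := by
  classical
  set S := powersetCard NT (univ : Finset (Fin N)) with hS
  -- membership characterization for the option-index sets
  have hmem : ∀ (k : Finset (Fin N)) (j : Option (Fin N)),
      j ∈ insert none (kᶜ.image some) ↔ j.toFinset ⊆ kᶜ := by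
    intro k j
    cases j <;> simp [Option.toFinset]
  -- the key counting lemma
  have key : ∀ i ∈ S, ∀ j j' : Option (Fin N),
      (∑ k ∈ S, if i ⊆ kᶜ ∧ j.toFinset ⊆ kᶜ ∧ j'.toFinset ⊆ kᶜ
        then a i j j' / (((kᶜ \ (j.toFinset ∪ j'.toFinset)).card).choose NT : ℝ) else 0)
      = a i j j' := by
    intro i hi j j'
    by_cases h0 : a i j j' = 0
    · simp [h0]
    set J := j.toFinset ∪ j'.toFinset with hJ
    have hicard : i.card = NT := (mem_powersetCard.mp hi).2
    have hdisj : Disjoint i J := by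
      rw [Finset.disjoint_union_right]
      constructor <;> rw [Finset.disjoint_right] <;> intro x hx hxi <;>
        apply h0 <;> apply ha i hi j j'
      · left; exact ⟨x, hxi, by cases j <;> simp_all [Option.toFinset]⟩
      · right; exact ⟨x, hxi, by cases j' <;> simp_all [Option.toFinset]⟩
    have hJcard : J.card ≤ 2 := by
      refine le_trans (card_union_le _ _) ?_
      have : j.toFinset.card ≤ 1 := by cases j <;> simp [Option.toFinset]
      have : j'.toFinset.card ≤ 1 := by cases j' <;> simp [Option.toFinset]
      omega
    have hterm : ∀ k ∈ S, (if i ⊆ kᶜ ∧ j.toFinset ⊆ kᶜ ∧ j'.toFinset ⊆ kᶜ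
        then a i j j' / (((kᶜ \ (j.toFinset ∪ j'.toFinset)).card).choose NT : ℝ) else 0)
        = if i ∪ J ⊆ kᶜ then a i j j' / (((N - NT - J.card).choose NT : ℝ)) else 0 := by
      intro k hk
      have hkcard : k.card = NT := (mem_powersetCard.mp hk).2
      have hkc : kᶜ.card = N - NT := by
        rw [card_compl, hkcard]; simp
      have hiff : (i ⊆ kᶜ ∧ j.toFinset ⊆ kᶜ ∧ j'.toFinset ⊆ kᶜ) ↔ i ∪ J ⊆ kᶜ := by
        rw [hJ, union_subset_iff, union_subset_iff]
      split_ifs with h1 h2 h2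
      · have hJk : J ⊆ kᶜ := union_subset h1.2.1 h1.2.2
        rw [card_sdiff_of_subset hJk, hkc]
      · exact absurd (hiff.mp h1) h2
      · exact absurd (hiff.mpr h2) h1
      · rfl
    rw [Finset.sum_congr rfl hterm]
    rw [Finset.sum_ite, Finset.sum_const_zero, add_zero, Finset.sum_const]
    have hfilter : S.filter (fun k => i ∪ J ⊆ kᶜ) = powersetCard NT (i ∪ J)ᶜ := by
      ext k
      simp only [mem_filter, mem_powersetCard, hS, subset_univ, true_and]
      rw [← Finset.subset_compl_comm]
      tauto
    have hcardT : (i ∪ J).card = NT + J.card := by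
      rw [card_union_of_disjoint hdisj, hicard]
    have hcardTc : ((i ∪ J)ᶜ).card = N - NT - J.card := by
      rw [card_compl, hcardT]; simp; omega
    rw [hfilter, card_powersetCard, hcardTc]
    have hpos : 0 < (N - NT - J.card).choose NT := Nat.choose_pos (by omega)
    rw [nsmul_eq_mul]
    field_simp
  -- rewrite inner sums of LHS as sums over fixed index sets with indicators
  have step1 : ∀ k ∈ S,
      (∑ i ∈ powersetCard NT kᶜ,
        ∑ j ∈ insert none (kᶜ.image some),
          ∑ j' ∈ insert none (kᶜ.image some),
            a i j j' / (((kᶜ \ (j.toFinset ∪ j'.toFinset)).card).choose NT : ℝ))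
      = ∑ i ∈ S, ∑ j : Option (Fin N), ∑ j' : Option (Fin N),
          (if i ⊆ kᶜ ∧ j.toFinset ⊆ kᶜ ∧ j'.toFinset ⊆ kᶜ
            then a i j j' / (((kᶜ \ (j.toFinset ∪ j'.toFinset)).card).choose NT : ℝ) else 0) := by
    intro k hk
    have hpc : powersetCard NT kᶜ = S.filter (fun i => i ⊆ kᶜ) := by
      ext i
      simp [mem_powersetCard, mem_filter, hS, and_comm]
    rw [hpc, Finset.sum_filter]
    refine Finset.sum_congr rfl fun i _ => ?_
    by_cases hik : i ⊆ kᶜ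
    · simp only [hik, if_true, true_and]
      have hD : insert none (kᶜ.image some) =
          (univ : Finset (Option (Fin N))).filter (fun j => j.toFinset ⊆ kᶜ) := by
        ext j
        simp [hmem, mem_filter]
      rw [hD, Finset.sum_filter]
      refine Finset.sum_congr rfl fun j _ => ?_
      by_cases hjk : j.toFinset ⊆ kᶜ
      · simp only [hjk, if_true, true_and]
        rw [Finset.sum_filter]
      · simp [hjk]
    · simp [hik]
  rw [Finset.sum_congr rfl step1, Finset.sum_comm]
  refine Finset.sum_congr rfl fun i hi => ?_
  rw [Finset.sum_comm]
  refine Finset.sum_congr rfl fun j _ => ?_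
  rw [Finset.sum_comm]
  exact Finset.sum_congr rfl fun j' _ => key i hi j j'
end

section
/- Fix a treated period t and a propensity vector p in (0,1]^N with sum_{i=1}^N p_i = 1, and suppose the treated unit i is drawn from {1,...,N} with probabilities p_i. Let M be a GSC weight tensor with M_{iit} = 1 for every i. Then the GSC estimator is unbiased for the treatment effect of the treated unit for all values of the potential outcomes (i.e., sum_{i=1}^N p_i * (tauhat_i - tau_i) = 0 for every choice of Y(0), Y(1) in R^{N x T}) if and only if the propensity-weighted column sums vanish: sum_{i=1}^N p_i M_{ijt} = 0 for every j in {1,...,N} and sum_{i=1}^N p_i M_{i0t} = 0. Moreover, the bias always satisfies sum_{i=1}^N p_i (tauhat_i - tau_i) = sum_{i=1}^N Y_{it}(0) * ( sum_{j=1}^N p_j M_{jit} ) + sum_{j=1}^N p_j M_{j0t}. -/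
open Finset

/-- Non-constant propensity scores: the GSC estimator (with unit diagonal weights) is
unbiased for the effect on the treated for all potential outcomes iff the
propensity-weighted column sums of the slope weights and of the intercepts vanish;
moreover the bias always equals the stated expression. -/
theorem stmt10 (N T : ℕ) (t : Fin T) (p : Fin N → ℝ)
    (hp : ∀ i, 0 < p i ∧ p i ≤ 1) (hpsum : ∑ i, p i = 1)
    (M0 : Fin N → Fin T → ℝ) (M : Fin N → Fin N → Fin T → ℝ)
    (hdiag : ∀ i, M i i t = 1) :
    ((∀ Y0 Y1 : Fin N → Fin T → ℝ,
        ∑ i, p i * ((M0 i t + ∑ j, M i j t * (if j = i then Y1 i t else Y0 j t))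
          - (Y1 i t - Y0 i t)) = 0)
      ↔ ((∀ j, ∑ i, p i * M i j t = 0) ∧ ∑ i, p i * M0 i t = 0))
    ∧ (∀ Y0 Y1 : Fin N → Fin T → ℝ,
        ∑ i, p i * ((M0 i t + ∑ j, M i j t * (if j = i then Y1 i t else Y0 j t))
          - (Y1 i t - Y0 i t))
        = ∑ i, Y0 i t * (∑ j, p j * M j i t) + ∑ j, p j * M0 j t) := by
  have key : ∀ Y0 Y1 : Fin N → Fin T → ℝ,
      ∑ i, p i * ((M0 i t + ∑ j, M i j t * (if j = i then Y1 i t else Y0 j t))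
          - (Y1 i t - Y0 i t))
        = ∑ i, Y0 i t * (∑ j, p j * M j i t) + ∑ j, p j * M0 j t := by
    intro Y0 Y1
    have hin : ∀ i, (∑ j, M i j t * (if j = i then Y1 i t else Y0 j t))
        = (∑ j, M i j t * Y0 j t) + (Y1 i t - Y0 i t) := by
      intro i
      have : ∀ j, M i j t * (if j = i then Y1 i t else Y0 j t)
          = M i j t * Y0 j t + (if j = i then Y1 i t - Y0 i t else 0) := by
        intro j
        by_cases h : j = i
        · subst h; simp [hdiag j]
        · simp [h]
      rw [Finset.sum_congr rfl (fun j _ => this j), Finset.sum_add_distrib,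
        Finset.sum_ite_eq' univ i (fun _ => Y1 i t - Y0 i t)]
      simp
    calc ∑ i, p i * ((M0 i t + ∑ j, M i j t * (if j = i then Y1 i t else Y0 j t))
          - (Y1 i t - Y0 i t))
        = ∑ i, (p i * M0 i t + ∑ j, p i * (M i j t * Y0 j t)) := by
          refine Finset.sum_congr rfl fun i _ => ?_
          rw [hin i, show p i * (M0 i t + ((∑ j, M i j t * Y0 j t) + (Y1 i t - Y0 i t))
            - (Y1 i t - Y0 i t)) = p i * M0 i t + p i * ∑ j, M i j t * Y0 j t from by ring,
            Finset.mul_sum]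
      _ = ∑ i, p i * M0 i t + ∑ i, ∑ j, p i * (M i j t * Y0 j t) :=
          Finset.sum_add_distrib
      _ = ∑ i, Y0 i t * (∑ j, p j * M j i t) + ∑ j, p j * M0 j t := by
          rw [Finset.sum_comm (s := univ) (t := univ)
            (f := fun i j => p i * (M i j t * Y0 j t))]
          rw [add_comm]
          congr 1
          refine Finset.sum_congr rfl fun j _ => ?_
          rw [Finset.mul_sum]
          refine Finset.sum_congr rfl fun i _ => ?_
          ring
  refine ⟨?_, key⟩
  constructor
  · intro h
    have hd : ∑ i, p i * M0 i t = 0 := by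
      have := (key (fun _ _ => 0) (fun _ _ => 0)).symm.trans
        (h (fun _ _ => 0) (fun _ _ => 0))
      simpa using this
    have hc : ∀ j, ∑ i, p i * M i j t = 0 := by
      intro j0
      have := (key (fun k _ => if k = j0 then 1 else 0) (fun _ _ => 0)).symm.trans
        (h (fun k _ => if k = j0 then 1 else 0) (fun _ _ => 0))
      simp only [ite_mul, one_mul, zero_mul, Finset.sum_ite_eq' univ j0,
        Finset.mem_univ, if_true] at this
      rw [hd, add_zero] at this
      exact this
    exact ⟨hc, hd⟩
  · rintro ⟨hc, hd⟩ Y0 Y1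
    rw [key]
    simp [hc, hd]
end

section
/- Let M be an N x N real matrix with M_{ii} = 1 for all i, M_{ij} <= 0 for all i != j, and all row sums zero (sum_{j=1}^N M_{ij} = 0 for every i). Then there exists a vector p in [0,1]^N with sum_{i=1}^N p_i = 1 such that M^T p = 0 (equivalently, sum_{i=1}^N p_i M_{ij} = 0 for every j in {1,...,N}). Consequently, the synthetic control estimator with weight matrix M is unbiased when the treated unit is drawn with probabilities p. -/
/-!
`A = 1 - M` is row-stochastic, and `Mᵀ p = 0` says that `p` is a stationary distribution of `A`,
i.e. a fixed point of `p ↦ p A` on the standard simplex. Such a fixed point exists for any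
continuous linear map preserving a nonempty compact convex set: the Cesàro averages of an orbit
stay in the set and are moved by only `O(1/n)`, so any of their limit points is fixed.
-/

open Finset Filter Topology Matrix

theorem Convex.birkhoffAverage_mem {R E α : Type*} [Field R] [LinearOrder R] [IsStrictOrderedRing R]
    [AddCommGroup E] [Module R E] {s : Set E} (hs : Convex R s) {f : α → α} {g : α → E} {x : α}
    (hg : ∀ k, g (f^[k] x) ∈ s) {n : ℕ} (hn : n ≠ 0) : birkhoffAverage R f g n x ∈ s := by
  have hn' : (n : R) ≠ 0 := Nat.cast_ne_zero.mpr hn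
  rw [birkhoffAverage, birkhoffSum, smul_sum]
  refine hs.sum_mem (fun _ _ => by positivity) ?_ (fun k _ => hg k)
  rw [sum_const, card_range, nsmul_eq_mul, mul_inv_cancel₀ hn']

theorem map_birkhoffAverage_id (R : Type*) {M F : Type*} [DivisionSemiring R] [AddCommMonoid M]
    [Module R M] [FunLike F M M] [AddMonoidHomClass F M M] (T : F) (n : ℕ) (x : M) :
    T (birkhoffAverage R T id n x) = birkhoffAverage R T id n (T x) := by
  rw [map_birkhoffAverage R R]
  simp only [birkhoffAverage, birkhoffSum, Function.comp_apply, id,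
    ← Function.iterate_succ_apply' T, Function.iterate_succ_apply]

theorem ContinuousLinearMap.exists_mem_isFixedPt_of_mapsTo {E : Type*} [NormedAddCommGroup E]
    [NormedSpace ℝ E] (T : E →L[ℝ] E) {K : Set E} (hKc : IsCompact K) (hKv : Convex ℝ K)
    (hK : K.Nonempty) (hT : Set.MapsTo T K K) : ∃ p ∈ K, Function.IsFixedPt T p := by
  obtain ⟨x, hx⟩ := hK
  set v : ℕ → E := fun n => birkhoffAverage ℝ T id n x
  have hv : ∀ᶠ n in atTop, v n ∈ K :=
    eventually_ne_atTop 0 |>.mono fun n hn => hKv.birkhoffAverage_mem (fun k => hT.iterate k hx) hn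
  have hdrift : Tendsto (fun n => T (v n) - v n) atTop (𝓝 0) := by
    simp only [v, map_birkhoffAverage_id]
    exact tendsto_birkhoffAverage_apply_sub_birkhoffAverage ℝ
      (hKc.isBounded.subset (Set.range_subset_iff.2 fun k => hT.iterate k hx))
  obtain ⟨p, hpK, φ, hφ, hlim⟩ := hKc.tendsto_subseq' hv.frequently
  refine ⟨p, hpK, ?_⟩
  have hlimT : Tendsto (fun n => T (v (φ n))) atTop (𝓝 (T p)) := (T.continuous.tendsto p).comp hlim
  have hlim' : Tendsto (v ∘ φ) atTop (𝓝 (T p - 0)) :=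
    (hlimT.sub (hdrift.comp hφ.tendsto_atTop)).congr fun n => sub_sub_cancel _ _
  show T p = p
  simpa using tendsto_nhds_unique hlim' hlim

namespace Matrix

variable {n : Type*} [Fintype n] [DecidableEq n] {A : Matrix n n ℝ}

theorem vecMul_mem_stdSimplex_of_mem_rowStochastic (hA : A ∈ rowStochastic ℝ n) {x : n → ℝ}
    (hx : x ∈ stdSimplex ℝ n) : x ᵥ* A ∈ stdSimplex ℝ n := by
  refine ⟨nonneg_vecMul_of_mem_rowStochastic hA hx.1, ?_⟩
  simpa [dotProduct] using
    vecMul_dotProduct_one_eq_one_rowStochastic hA (x := x) (by simpa [dotProduct] using hx.2)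

theorem exists_mem_stdSimplex_vecMul_eq_self_of_mem_rowStochastic [Nonempty n]
    (hA : A ∈ rowStochastic ℝ n) : ∃ p ∈ stdSimplex ℝ n, p ᵥ* A = p :=
  (vecMulLinear A).toContinuousLinearMap.exists_mem_isFixedPt_of_mapsTo
    (isCompact_stdSimplex ℝ n) (convex_stdSimplex ℝ n)
    ⟨_, single_mem_stdSimplex ℝ (Classical.arbitrary n)⟩
    fun _ hx => vecMul_mem_stdSimplex_of_mem_rowStochastic hA hx

end Matrix

/-- For every SC weight matrix (unit diagonal, nonpositive off-diagonal entries, zero row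
sums) there exists a propensity-score vector p with Mᵀ p = 0, i.e. a distribution over
treated units under which the SC estimator is unbiased. -/
theorem stmt11 (N : ℕ) (hN : 0 < N) (M : Fin N → Fin N → ℝ)
    (hdiag : ∀ i, M i i = 1)
    (hoff : ∀ i j, i ≠ j → M i j ≤ 0)
    (hrow : ∀ i, ∑ j, M i j = 0) :
    ∃ p : Fin N → ℝ, (∀ i, 0 ≤ p i ∧ p i ≤ 1) ∧ (∑ i, p i = 1) ∧
      ∀ j, ∑ i, p i * M i j = 0 := by
  have : Nonempty (Fin N) := ⟨⟨0, hN⟩⟩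
  have hA : 1 - Matrix.of M ∈ rowStochastic ℝ (Fin N) := by
    refine mem_rowStochastic_iff_sum.2 ⟨fun i j => ?_, fun i => ?_⟩
    · rcases eq_or_ne i j with rfl | hij
      · simp [hdiag]
      · simpa [one_apply_ne hij] using hoff i j hij
    · simp [sum_sub_distrib, one_apply, hrow]
  obtain ⟨p, hp, hpA⟩ := exists_mem_stdSimplex_vecMul_eq_self_of_mem_rowStochastic hA
  have hpM : p ᵥ* Matrix.of M = 0 := by
    rwa [vecMul_sub, vecMul_one, sub_eq_self] at hpA
  exact ⟨p, fun i => mem_Icc_of_mem_stdSimplex hp i, hp.2, fun j => congrFun hpM j⟩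
end

section
/- Let M be an N x N real matrix with M_{ii} = 1 for all i, M_{ij} <= 0 for all i != j, and all row sums zero (sum_{j=1}^N M_{ij} = 0 for every i). If q in R^N satisfies M^T q = 0, then the componentwise absolute value vector |q| (with entries |q_i|) also satisfies M^T |q| = 0. -/
open Finset

/-- Key kernel step: if q is in the kernel of Mᵀ for an SC weight matrix M (unit diagonal,
nonpositive off-diagonal entries, zero row sums), then so is the componentwise absolute
value of q. -/
theorem stmt12 (N : ℕ) (M : Fin N → Fin N → ℝ)
    (hdiag : ∀ i, M i i = 1)
    (hoff : ∀ i j, i ≠ j → M i j ≤ 0)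
    (hrow : ∀ i, ∑ j, M i j = 0)
    (q : Fin N → ℝ) (hq : ∀ j, ∑ i, q i * M i j = 0) :
    ∀ j, ∑ i, |q i| * M i j = 0 := by
  have hle : ∀ j, ∑ i, |q i| * M i j ≤ 0 := by
    intro j
    have hsplit : ∑ i, q i * M i j
        = q j * M j j + ∑ i ∈ univ.erase j, q i * M i j :=
      (Finset.add_sum_erase _ _ (mem_univ j)).symm
    have hqj : q j = -∑ i ∈ univ.erase j, q i * M i j := by
      have := hq j
      rw [hsplit, hdiag j, mul_one] at this
      linarith
    have habs : |q j| ≤ ∑ i ∈ univ.erase j, |q i| * (-M i j) := by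
      calc |q j| = |∑ i ∈ univ.erase j, q i * M i j| := by rw [hqj, abs_neg]
        _ ≤ ∑ i ∈ univ.erase j, |q i * M i j| := Finset.abs_sum_le_sum_abs _ _
        _ = ∑ i ∈ univ.erase j, |q i| * (-M i j) := by
            refine Finset.sum_congr rfl fun i hi => ?_
            rw [abs_mul, abs_of_nonpos (hoff i j (Finset.ne_of_mem_erase hi))]
    have hsplit2 : ∑ i, |q i| * M i j
        = |q j| * M j j + ∑ i ∈ univ.erase j, |q i| * M i j :=
      (Finset.add_sum_erase _ _ (mem_univ j)).symm
    rw [hsplit2, hdiag j, mul_one]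
    have : ∑ i ∈ univ.erase j, |q i| * (-M i j)
        = -∑ i ∈ univ.erase j, |q i| * M i j := by
      rw [← Finset.sum_neg_distrib]
      exact Finset.sum_congr rfl fun i _ => by ring
    linarith [habs, this ▸ habs]
  have hsum : ∑ j, ∑ i, |q i| * M i j = 0 := by
    rw [Finset.sum_comm]
    calc ∑ i, ∑ j, |q i| * M i j = ∑ i : Fin N, |q i| * ∑ j, M i j := by
          simp [Finset.mul_sum]
      _ = 0 := by simp [hrow]
  intro j
  have h := (Finset.sum_eq_zero_iff_of_nonpos (fun i _ => hle i)).mp hsum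
  exact h j (mem_univ j)
end
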